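/- Let F̂: ℝ^d → ℝ^d be a lift of a torus map, F̂(z) = Mz + G(z), such that F̂ is a homeomorphism of ℝ^d and both M and M^{−1} have integer entries. Suppose P∘M = A∘P where P is the projection onto the first k coordinates, and A is a k×k block-diagonal hyperbolic matrix A = A_u ⊕ A_s, where A_u is k_u×k_u invertible with ‖A_u^{−1}‖ < 1, A_s is k_s×k_s with ‖A_s‖ < 1, and k = k_u + k_s. Write P_u, P_s for the compositions of P with the projections of ℝ^k onto the first k_u and last k_s coordinates. Then the map Φ̂(z) := ( lim_{n→∞} A_u^{−n} P_u(F̂^{n}(z)) , lim_{n→∞} A_s^{n} P_s(F̂^{−n}(z)) ) ∈ ℝ^k is well defined and continuous, satisfies Φ̂(F̂(z)) = A·Φ̂(z) for all z ∈ ℝ^d, and satisfies Φ̂(z + p) = Φ̂(z) + P p for all z ∈ ℝ^d and p ∈ ℤ^d; hence F̂ descends to a torus map semi-conjugate to the linear torus map θ ↦ Aθ mod 1 on ℝ^k/ℤ^k. -/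

import Mathlib

open Filter Topology

noncomputable section

/-- Reinterpret a vector `Fin d → ℝ` as a point of Euclidean space `ℝ^d`. -/
def toEuc (d : ℕ) (v : Fin d → ℝ) : EuclideanSpace ℝ (Fin d) := WithLp.toLp 2 v

/-- Projection onto the first `k` coordinates of `ℝ^d`. -/
def projP (d k : ℕ) (h : k ≤ d) (z : EuclideanSpace ℝ (Fin d)) :
    EuclideanSpace ℝ (Fin k) :=
  WithLp.toLp 2 fun (i : Fin k) => z (Fin.castLE h i)

/-- Projection onto the last `d - k` coordinates of `ℝ^d`. -/
def projQ (d k : ℕ) (h : k ≤ d) (z : EuclideanSpace ℝ (Fin d)) :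
    EuclideanSpace ℝ (Fin (d - k)) :=
  WithLp.toLp 2 fun (j : Fin (d - k)) => z ⟨k + j.val, by have := j.isLt; omega⟩

/-- The canonical projection `ℝ^n → ℝ^n/ℤ^n` (the `n`-torus), coordinatewise `mod 1`. -/
def torusProj (n : ℕ) (z : EuclideanSpace ℝ (Fin n)) : Fin n → AddCircle (1 : ℝ) :=
  fun i => ((z i : ℝ) : AddCircle (1 : ℝ))

/-!
Both limits are telescoping series. Along `P_u`, `F̂` agrees with `A_u` up to the bounded error
`P_u ∘ G`, so the increments of `A_u⁻ⁿ P_u (F̂ⁿ z)` are `O(‖A_u⁻¹‖ⁿ)` uniformly in `z`: the limit is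
a uniform limit of continuous maps, and shifting the index gives `Φ̂ ∘ F̂ = A ∘ Φ̂`. The same
argument applies to `A_sⁿ P_s (F̂⁻ⁿ z)`, because `F̂⁻¹` is again a lift, with linear part `M⁻¹`.
Finally `F̂ⁿ (z + p) = F̂ⁿ z + Mⁿ p` and `A_u⁻ⁿ P_u Mⁿ p = P_u p` for integer `p`, so `Φ̂` is
`ℤ^d`-equivariant; as `M` is integral, so is `A` on `ℤ^k`, and all maps descend to the tori.
-/

open Function Set

theorem ContinuousLinearEquiv.toContinuousLinearMap_pow {R M : Type*} [Semiring R]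
    [TopologicalSpace M] [AddCommMonoid M] [Module R M] (e : M ≃L[R] M) (n : ℕ) :
    ((e ^ n : M ≃L[R] M) : M →L[R] M) = (e : M →L[R] M) ^ n := by
  induction n with
  | zero => rfl
  | succ n ih => rw [pow_succ, pow_succ, ← ih]; rfl

theorem ContinuousLinearMap.norm_pow_apply_le {E : Type*} [NormedAddCommGroup E]
    [NormedSpace ℝ E] (T : E →L[ℝ] E) (n : ℕ) (x : E) : ‖(T ^ n) x‖ ≤ ‖T‖ ^ n * ‖x‖ := by
  rcases n.eq_zero_or_pos with rfl | hn
  · simp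
  · exact (T ^ n).le_opNorm x |>.trans (by gcongr; exact norm_pow_le' T hn)

section Linearization

variable {X E : Type*} [NormedAddCommGroup E] [NormedSpace ℝ E]

/-- The limit of `(T ^ n) (π (g^[n] x))`, written as `π x` plus a telescoping series. -/
def linearization (T : E →L[ℝ] E) (π : X → E) (g : X → X) (x : X) : E :=
  π x + ∑' n, (T ^ n) (T (π (g (g^[n] x))) - π (g^[n] x))

variable {T : E →L[ℝ] E} {π : X → E} {g : X → X}

theorem pow_apply_iterate_eq_add_sum (x : X) (n : ℕ) :
    (T ^ n) (π (g^[n] x))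
      = π x + ∑ i ∈ Finset.range n, (T ^ i) (T (π (g (g^[i] x))) - π (g^[i] x)) := by
  have telescope : ∀ i, (T ^ i) (T (π (g (g^[i] x))) - π (g^[i] x))
      = (T ^ (i + 1)) (π (g^[i + 1] x)) - (T ^ i) (π (g^[i] x)) := fun i => by
    rw [map_sub, pow_succ, mul_apply_eq_comp, iterate_succ_apply']
  rw [Finset.sum_congr rfl fun i _ => telescope i,
    Finset.sum_range_sub fun i => (T ^ i) (π (g^[i] x))]
  simp

theorem norm_pow_apply_defect_le {C : ℝ} (hC : ∀ x, ‖T (π (g x)) - π x‖ ≤ C) (n : ℕ) (x : X) :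
    ‖(T ^ n) (T (π (g x)) - π x)‖ ≤ ‖T‖ ^ n * C :=
  (T.norm_pow_apply_le n _).trans (by gcongr; exact hC x)

theorem iterate_add_of_mapsTo [Add X] {Λ : Set X} {L : X → X} (hLΛ : MapsTo L Λ Λ)
    (hgL : ∀ x, ∀ v ∈ Λ, g (x + v) = g x + L v) (n : ℕ) (x : X) {v : X} (hv : v ∈ Λ) :
    g^[n] (x + v) = g^[n] x + L^[n] v := by
  induction n with
  | zero => rfl
  | succ n ih => rw [iterate_succ_apply', ih, hgL _ _ (hLΛ.iterate n hv), iterate_succ_apply',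
      iterate_succ_apply']

theorem pow_apply_iterate_of_mapsTo {Λ : Set X} {L : X → X} (hLΛ : MapsTo L Λ Λ)
    (hπL : ∀ v ∈ Λ, T (π (L v)) = π v) (n : ℕ) {v : X} (hv : v ∈ Λ) :
    (T ^ n) (π (L^[n] v)) = π v := by
  induction n with
  | zero => rfl
  | succ n ih => rw [pow_succ, mul_apply_eq_comp, iterate_succ_apply',
      hπL _ (hLΛ.iterate n hv), ih]

variable [CompleteSpace E] {C : ℝ}

theorem tendsto_linearization (hT : ‖T‖ < 1) (hC : ∀ x, ‖T (π (g x)) - π x‖ ≤ C) (x : X) :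
    Tendsto (fun n => (T ^ n) (π (g^[n] x))) atTop (𝓝 (linearization T π g x)) := by
  have hsum : Summable fun n => (T ^ n) (T (π (g (g^[n] x))) - π (g^[n] x)) :=
    .of_norm_bounded ((summable_geometric_of_lt_one (norm_nonneg T) hT).mul_right C)
      fun n => norm_pow_apply_defect_le hC n _
  simp only [pow_apply_iterate_eq_add_sum x]
  exact hsum.hasSum.tendsto_sum_nat.const_add (π x)

theorem continuous_linearization [TopologicalSpace X] (hT : ‖T‖ < 1)
    (hC : ∀ x, ‖T (π (g x)) - π x‖ ≤ C) (hπ : Continuous π) (hg : Continuous g) :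
    Continuous (linearization T π g) :=
  hπ.add <| continuous_tsum
    (fun n => (T ^ n).continuous.comp
      (((T.continuous.comp (hπ.comp hg)).sub hπ).comp (hg.iterate n)))
    ((summable_geometric_of_lt_one (norm_nonneg T) hT).mul_right C)
    fun n _ => norm_pow_apply_defect_le hC n _

theorem apply_linearization_apply (hT : ‖T‖ < 1) (hC : ∀ x, ‖T (π (g x)) - π x‖ ≤ C) (x : X) :
    T (linearization T π g (g x)) = linearization T π g x := by
  refine tendsto_nhds_unique ((T.continuous.tendsto _).comp (tendsto_linearization hT hC (g x)))
    (((tendsto_linearization hT hC x).comp (tendsto_add_atTop_nat 1)).congr fun n => ?_)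
  simp only [comp_apply, pow_succ', mul_apply_eq_comp, iterate_succ_apply]

theorem linearization_add [Add X] (hT : ‖T‖ < 1) (hC : ∀ x, ‖T (π (g x)) - π x‖ ≤ C)
    (hπ : ∀ x y, π (x + y) = π x + π y) {Λ : Set X} {L : X → X} (hLΛ : MapsTo L Λ Λ)
    (hgL : ∀ x, ∀ v ∈ Λ, g (x + v) = g x + L v) (hπL : ∀ v ∈ Λ, T (π (L v)) = π v)
    (x : X) {v : X} (hv : v ∈ Λ) :
    linearization T π g (x + v) = linearization T π g x + π v := by
  refine tendsto_nhds_unique (tendsto_linearization hT hC (x + v))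
    (((tendsto_linearization hT hC x).add_const (π v)).congr fun n => ?_)
  rw [iterate_add_of_mapsTo hLΛ hgL n x hv, hπ, map_add,
    pow_apply_iterate_of_mapsTo hLΛ hπL n hv]

end Linearization

section Semiconjugacy

variable {X E : Type*} [AddCommGroup X] [TopologicalSpace X] [Module ℝ X]
  [NormedAddCommGroup E] [NormedSpace ℝ E] [CompleteSpace E]
  {π : X →L[ℝ] E} {C : ℝ} {Λ : Set X} {L : X → X}

theorem exists_semiconj_of_expanding {F : X → X} (hF : Continuous F) {A : E ≃L[ℝ] E}
    (hA : ‖(A.symm : E →L[ℝ] E)‖ < 1) (hC : ∀ x, ‖π (F x) - A (π x)‖ ≤ C)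
    (hLΛ : MapsTo L Λ Λ) (hFL : ∀ x, ∀ v ∈ Λ, F (x + v) = F x + L v)
    (hπL : ∀ v ∈ Λ, π (L v) = A (π v)) :
    ∃ Φ : X → E, (∀ x, Tendsto (fun n : ℕ => (A.symm ^ n) (π (F^[n] x))) atTop (𝓝 (Φ x))) ∧
      Continuous Φ ∧ (∀ x, Φ (F x) = A (Φ x)) ∧ ∀ x, ∀ v ∈ Λ, Φ (x + v) = Φ x + π v := by
  have hdefect : ∀ x, ‖A.symm (π (F x)) - π x‖ ≤ ‖(A.symm : E →L[ℝ] E)‖ * C := fun x => by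
    rw [← A.symm_apply_apply (π x), ← map_sub]
    exact (A.symm : E →L[ℝ] E).le_opNorm_of_le (hC x)
  have hπL' : ∀ v ∈ Λ, A.symm (π (L v)) = π v := fun v hv => by
    rw [hπL v hv, A.symm_apply_apply]
  refine ⟨linearization A.symm π F, fun x => ?_, continuous_linearization hA hdefect
    π.continuous hF, fun x => ?_, fun x v hv => linearization_add hA hdefect (map_add π)
    hLΛ hFL hπL' x hv⟩
  · simpa only [← ContinuousLinearEquiv.toContinuousLinearMap_pow, ContinuousLinearEquiv.coe_coe]
      using tendsto_linearization hA hdefect x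
  · exact A.symm_apply_eq.1 (apply_linearization_apply hA hdefect x)

theorem exists_semiconj_of_contracting (F : X ≃ₜ X) {B : E →L[ℝ] E} (hB : ‖B‖ < 1)
    (hC : ∀ x, ‖π (F x) - B (π x)‖ ≤ C)
    (hLΛ : MapsTo L Λ Λ) (hFL : ∀ x, ∀ v ∈ Λ, F.symm (x + v) = F.symm x + L v)
    (hπL : ∀ v ∈ Λ, B (π (L v)) = π v) :
    ∃ Φ : X → E, (∀ x, Tendsto (fun n : ℕ => (B ^ n) (π (F.symm^[n] x))) atTop (𝓝 (Φ x))) ∧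
      Continuous Φ ∧ (∀ x, Φ (F x) = B (Φ x)) ∧ ∀ x, ∀ v ∈ Λ, Φ (x + v) = Φ x + π v := by
  have hdefect : ∀ x, ‖B (π (F.symm x)) - π x‖ ≤ C := fun x => by
    simpa only [F.apply_symm_apply, norm_sub_rev] using hC (F.symm x)
  refine ⟨linearization B π F.symm, tendsto_linearization hB hdefect,
    continuous_linearization hB hdefect π.continuous F.symm.continuous, fun x => ?_,
    fun x v hv => linearization_add hB hdefect (map_add π) hLΛ hFL hπL x hv⟩
  simpa only [F.symm_apply_apply] using (apply_linearization_apply hB hdefect (F x)).symm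

end Semiconjugacy

section IntegerLattice

def intVec (n : ℕ) (p : Fin n → ℤ) : EuclideanSpace ℝ (Fin n) := toEuc n fun i => (p i : ℝ)

variable {m n : ℕ}

theorem torusProj_add_intVec (z : EuclideanSpace ℝ (Fin n)) (p : Fin n → ℤ) :
    torusProj n (z + intVec n p) = torusProj n z := by
  funext i
  simp [torusProj, intVec, toEuc]

theorem torusProj_eq_torusProj_iff {z w : EuclideanSpace ℝ (Fin n)} :
    torusProj n z = torusProj n w ↔ ∃ p, w = z + intVec n p := by
  refine ⟨fun h => ?_, fun ⟨p, hp⟩ => hp ▸ (torusProj_add_intVec z p).symm⟩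
  have hcoord : ∀ i, ∃ p : ℤ, p • (1 : ℝ) = -z i + w i := fun i =>
    AddSubgroup.mem_zmultiples_iff.1 (QuotientAddGroup.eq.1 (congrFun h i))
  choose p hp using hcoord
  refine ⟨p, PiLp.ext fun i => ?_⟩
  have := hp i
  rw [zsmul_eq_mul, mul_one] at this
  simp [intVec, toEuc, this]

theorem torusProj_surjective (n : ℕ) : Surjective (torusProj n) := fun θ =>
  ⟨WithLp.toLp 2 fun i => (θ i).out, funext fun i => QuotientAddGroup.out_eq' (θ i)⟩

theorem exists_torusProj_comp_eq (f : EuclideanSpace ℝ (Fin n) → EuclideanSpace ℝ (Fin m))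
    (hf : ∀ z p, ∃ q, f (z + intVec n p) = f z + intVec m q) :
    ∃ f' : (Fin n → AddCircle (1 : ℝ)) → (Fin m → AddCircle (1 : ℝ)),
      ∀ z, f' (torusProj n z) = torusProj m (f z) := by
  refine ⟨extend (torusProj n) (torusProj m ∘ f) fun _ => 0,
    FactorsThrough.extend_apply (fun z w hzw => ?_) _⟩
  obtain ⟨p, rfl⟩ := torusProj_eq_torusProj_iff.1 hzw
  obtain ⟨q, hq⟩ := hf z p
  simp only [comp_apply, hq, torusProj_add_intVec]

theorem mapsTo_toEuclideanLin_intVec {M : Matrix (Fin n) (Fin n) ℝ}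
    (hM : ∀ i j, ∃ k : ℤ, M i j = k) :
    MapsTo (Matrix.toEuclideanLin M) (range (intVec n)) (range (intVec n)) := by
  choose K hK using hM
  rintro _ ⟨p, rfl⟩
  refine ⟨Matrix.mulVec K p, PiLp.ext fun i => ?_⟩
  simp [intVec, toEuc, Matrix.mulVec, dotProduct, hK]

def coordSelect {ι κ : Type*} [Fintype ι] [Fintype κ] (e : κ → ι) :
    EuclideanSpace ℝ ι →L[ℝ] EuclideanSpace ℝ κ :=
  LinearMap.toContinuousLinearMap
    { toFun := fun z => WithLp.toLp 2 fun i => z (e i)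
      map_add' := fun _ _ => rfl
      map_smul' := fun _ _ => rfl }

theorem coordSelect_intVec (e : Fin m → Fin n) (p : Fin n → ℤ) :
    coordSelect e (intVec n p) = intVec m (p ∘ e) := rfl

theorem exists_apply_add_intVec {e : Fin m → Fin n} (he : Injective e)
    {M : Matrix (Fin n) (Fin n) ℝ} (hM : ∀ i j, ∃ k : ℤ, M i j = k)
    {𝓐 : Type*} [FunLike 𝓐 (EuclideanSpace ℝ (Fin m)) (EuclideanSpace ℝ (Fin m))]
    [AddHomClass 𝓐 (EuclideanSpace ℝ (Fin m)) (EuclideanSpace ℝ (Fin m))] {A : 𝓐}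
    (hA : ∀ z, coordSelect e (Matrix.toEuclideanLin M z) = A (coordSelect e z))
    (x : EuclideanSpace ℝ (Fin m)) (p : Fin m → ℤ) :
    ∃ q, A (x + intVec m p) = A x + intVec m q := by
  obtain ⟨q, hq⟩ := mapsTo_toEuclideanLin_intVec hM ⟨extend e p 0, rfl⟩
  refine ⟨q ∘ e, ?_⟩
  rw [map_add, ← extend_comp he p 0, ← coordSelect_intVec, ← hA, ← hq, coordSelect_intVec]

end IntegerLattice

section Lift

variable {n : ℕ} {M : Matrix (Fin n) (Fin n) ℝ}
  {G : EuclideanSpace ℝ (Fin n) → EuclideanSpace ℝ (Fin n)}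

theorem toEuclideanLin_apply_toEuclideanLin_of_mul_eq_one {𝕜 ι : Type*} [RCLike 𝕜] [Fintype ι]
    [DecidableEq ι] {A B : Matrix ι ι 𝕜} (h : A * B = 1) (v : EuclideanSpace 𝕜 ι) :
    Matrix.toEuclideanLin A (Matrix.toEuclideanLin B v) = v := by
  rw [← LinearMap.comp_apply, ← Matrix.toLpLin_mul_same, h, Matrix.toLpLin_one,
    LinearMap.id_apply]

theorem lift_add_intVec {F : EuclideanSpace ℝ (Fin n) → EuclideanSpace ℝ (Fin n)}
    (hF : ∀ z, F z = Matrix.toEuclideanLin M z + G z) (hG : ∀ z p, G (z + intVec n p) = G z)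
    (z : EuclideanSpace ℝ (Fin n)) (p : Fin n → ℤ) :
    F (z + intVec n p) = F z + Matrix.toEuclideanLin M (intVec n p) := by
  rw [hF, hF, hG, map_add, add_right_comm]

theorem exists_lift_add_intVec {F : EuclideanSpace ℝ (Fin n) → EuclideanSpace ℝ (Fin n)}
    (hF : ∀ z, F z = Matrix.toEuclideanLin M z + G z) (hG : ∀ z p, G (z + intVec n p) = G z)
    (hM : ∀ i j, ∃ k : ℤ, M i j = k) (z : EuclideanSpace ℝ (Fin n)) (p : Fin n → ℤ) :
    ∃ q, F (z + intVec n p) = F z + intVec n q := by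
  obtain ⟨q, hq⟩ := mapsTo_toEuclideanLin_intVec hM ⟨p, rfl⟩
  exact ⟨q, by rw [lift_add_intVec hF hG, ← hq]⟩

theorem lift_symm_add_intVec {F : EuclideanSpace ℝ (Fin n) ≃ₜ EuclideanSpace ℝ (Fin n)}
    (hF : ∀ z, F z = Matrix.toEuclideanLin M z + G z) (hG : ∀ z p, G (z + intVec n p) = G z)
    {N : Matrix (Fin n) (Fin n) ℝ} (hN : ∀ i j, ∃ k : ℤ, N i j = k) (hMN : M * N = 1)
    (z : EuclideanSpace ℝ (Fin n)) (p : Fin n → ℤ) :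
    F.symm (z + intVec n p) = F.symm z + Matrix.toEuclideanLin N (intVec n p) := by
  obtain ⟨q, hq⟩ := mapsTo_toEuclideanLin_intVec hN ⟨p, rfl⟩
  rw [F.symm_apply_eq, ← hq, lift_add_intVec hF hG, hq,
    toEuclideanLin_apply_toEuclideanLin_of_mul_eq_one hMN, F.apply_symm_apply]

theorem norm_map_lift_sub_le {E : Type*} [NormedAddCommGroup E] [NormedSpace ℝ E]
    {F : EuclideanSpace ℝ (Fin n) → EuclideanSpace ℝ (Fin n)}
    (hF : ∀ z, F z = Matrix.toEuclideanLin M z + G z) {π : EuclideanSpace ℝ (Fin n) →L[ℝ] E}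
    {A : E → E} (hπM : ∀ z, π (Matrix.toEuclideanLin M z) = A (π z)) {C : ℝ}
    (hC : ∀ z, ‖G z‖ ≤ C) (z : EuclideanSpace ℝ (Fin n)) :
    ‖π (F z) - A (π z)‖ ≤ ‖π‖ * C := by
  rw [hF, map_add, hπM, add_sub_cancel_left]
  exact π.le_opNorm_of_le (hC z)

end Lift

theorem stmt7_general (d k ku : ℕ) (hku : ku ≤ k) (hkd : k ≤ d)
    (M : Matrix (Fin d) (Fin d) ℝ) (hMint : ∀ i j, ∃ n : ℤ, M i j = (n : ℝ))
    (hMinv : ∃ N : Matrix (Fin d) (Fin d) ℝ,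
      (∀ i j, ∃ n : ℤ, N i j = (n : ℝ)) ∧ M * N = 1 ∧ N * M = 1)
    (G : EuclideanSpace ℝ (Fin d) → EuclideanSpace ℝ (Fin d))
    (hGbdd : ∃ C, ∀ z, ‖G z‖ ≤ C)
    (hGper : ∀ (z : EuclideanSpace ℝ (Fin d)) (p : Fin d → ℤ),
      G (z + toEuc d fun i => (p i : ℝ)) = G z)
    (F : EuclideanSpace ℝ (Fin d) ≃ₜ EuclideanSpace ℝ (Fin d))
    (hF : ∀ z, F z = toEuc d (M.mulVec z) + G z)
    (Au : EuclideanSpace ℝ (Fin ku) ≃L[ℝ] EuclideanSpace ℝ (Fin ku))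
    (hAu : ‖(Au.symm : EuclideanSpace ℝ (Fin ku) →L[ℝ] EuclideanSpace ℝ (Fin ku))‖ < 1)
    (As : EuclideanSpace ℝ (Fin (k - ku)) →L[ℝ] EuclideanSpace ℝ (Fin (k - ku)))
    (hAs : ‖As‖ < 1)
    (hPuM : ∀ z : EuclideanSpace ℝ (Fin d),
      projP k ku hku (projP d k hkd (toEuc d (M.mulVec z)))
        = Au (projP k ku hku (projP d k hkd z)))
    (hPsM : ∀ z : EuclideanSpace ℝ (Fin d),
      projQ k ku hku (projP d k hkd (toEuc d (M.mulVec z)))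
        = As (projQ k ku hku (projP d k hkd z))) :
    ∃ (Φu : EuclideanSpace ℝ (Fin d) → EuclideanSpace ℝ (Fin ku))
      (Φs : EuclideanSpace ℝ (Fin d) → EuclideanSpace ℝ (Fin (k - ku))),
      (∀ z, Tendsto (fun n : ℕ =>
          (Au.symm ^ n) (projP k ku hku (projP d k hkd (F^[n] z))))
        atTop (𝓝 (Φu z))) ∧
      (∀ z, Tendsto (fun n : ℕ =>
          (As ^ n) (projQ k ku hku (projP d k hkd (F.symm^[n] z))))
        atTop (𝓝 (Φs z))) ∧
      Continuous Φu ∧ Continuous Φs ∧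
      (∀ z, Φu (F z) = Au (Φu z)) ∧
      (∀ z, Φs (F z) = As (Φs z)) ∧
      (∀ (z : EuclideanSpace ℝ (Fin d)) (p : Fin d → ℤ),
        Φu (z + toEuc d fun i => (p i : ℝ))
          = Φu z + projP k ku hku (projP d k hkd (toEuc d fun i => (p i : ℝ)))) ∧
      (∀ (z : EuclideanSpace ℝ (Fin d)) (p : Fin d → ℤ),
        Φs (z + toEuc d fun i => (p i : ℝ))
          = Φs z + projQ k ku hku (projP d k hkd (toEuc d fun i => (p i : ℝ)))) ∧
      -- hence `F̂` descends to a torus map semi-conjugate to `θ ↦ Aθ mod 1`: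
      ∃ (Fbar : (Fin d → AddCircle (1 : ℝ)) → (Fin d → AddCircle (1 : ℝ)))
        (Φbar : (Fin d → AddCircle (1 : ℝ)) →
          (Fin ku → AddCircle (1 : ℝ)) × (Fin (k - ku) → AddCircle (1 : ℝ)))
        (Abar : (Fin ku → AddCircle (1 : ℝ)) × (Fin (k - ku) → AddCircle (1 : ℝ)) →
          (Fin ku → AddCircle (1 : ℝ)) × (Fin (k - ku) → AddCircle (1 : ℝ))),
        (∀ z, Fbar (torusProj d z) = torusProj d (F z)) ∧
        (∀ z, Φbar (torusProj d z) = (torusProj ku (Φu z), torusProj (k - ku) (Φs z))) ∧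
        (∀ (x : EuclideanSpace ℝ (Fin ku)) (y : EuclideanSpace ℝ (Fin (k - ku))),
          Abar (torusProj ku x, torusProj (k - ku) y)
            = (torusProj ku (Au x), torusProj (k - ku) (As y))) ∧
        (∀ θ, Φbar (Fbar θ) = Abar (Φbar θ)) := by
  obtain ⟨N, hNint, hMN, -⟩ := hMinv
  obtain ⟨C, hC⟩ := hGbdd
  set eu : Fin ku → Fin d := fun i => Fin.castLE hkd (Fin.castLE hku i)
  set es : Fin (k - ku) → Fin d := fun j => Fin.castLE hkd ⟨ku + j, by omega⟩
  have heu : Injective eu := (Fin.castLE_injective hkd).comp (Fin.castLE_injective hku)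
  have hes : Injective es := fun i j h => Fin.ext (by simpa [es] using congrArg Fin.val h)
  have hPu : ∀ z, coordSelect eu (Matrix.toEuclideanLin M z) = Au (coordSelect eu z) := hPuM
  have hPs : ∀ z, coordSelect es (Matrix.toEuclideanLin M z) = As (coordSelect es z) := hPsM
  obtain ⟨Φu, hΦu, hΦu_cont, hΦu_F, hΦu_add⟩ := exists_semiconj_of_expanding F.continuous hAu
    (norm_map_lift_sub_le hF hPu hC) (mapsTo_toEuclideanLin_intVec hMint)
    (by rintro z _ ⟨p, rfl⟩; exact lift_add_intVec hF hGper z p) fun v _ => hPu v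
  obtain ⟨Φs, hΦs, hΦs_cont, hΦs_F, hΦs_add⟩ := exists_semiconj_of_contracting F hAs
    (norm_map_lift_sub_le hF hPs hC) (mapsTo_toEuclideanLin_intVec hNint)
    (by rintro z _ ⟨p, rfl⟩; exact lift_symm_add_intVec hF hGper hNint hMN z p) fun v _ => by
      rw [← hPs, toEuclideanLin_apply_toEuclideanLin_of_mul_eq_one hMN]
  obtain ⟨Fbar, hFbar⟩ := exists_torusProj_comp_eq F (exists_lift_add_intVec hF hGper hMint)
  obtain ⟨Φubar, hΦubar⟩ := exists_torusProj_comp_eq Φu fun z p => ⟨p ∘ eu, hΦu_add z _ ⟨p, rfl⟩⟩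
  obtain ⟨Φsbar, hΦsbar⟩ := exists_torusProj_comp_eq Φs fun z p => ⟨p ∘ es, hΦs_add z _ ⟨p, rfl⟩⟩
  obtain ⟨Aubar, hAubar⟩ := exists_torusProj_comp_eq Au (exists_apply_add_intVec heu hMint hPu)
  obtain ⟨Asbar, hAsbar⟩ := exists_torusProj_comp_eq As (exists_apply_add_intVec hes hMint hPs)
  refine ⟨Φu, Φs, hΦu, hΦs, hΦu_cont, hΦs_cont, hΦu_F, hΦs_F, fun z p => hΦu_add z _ ⟨p, rfl⟩,
    fun z p => hΦs_add z _ ⟨p, rfl⟩, Fbar, fun θ => (Φubar θ, Φsbar θ), Prod.map Aubar Asbar,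
    hFbar, fun z => by simp only [hΦubar, hΦsbar],
    fun x y => by simp only [Prod.map, hAubar, hAsbar], ?_⟩
  intro θ
  obtain ⟨z, rfl⟩ := torusProj_surjective d θ
  simp only [hFbar, hΦubar, hΦsbar, hΦu_F, hΦs_F, Prod.map, hAubar, hAsbar]

/--
Let `F̂ : ℝ^d → ℝ^d` be a lift of a torus map, `F̂(z) = Mz + G(z)`, such
that `F̂` is a homeomorphism of `ℝ^d` and both `M` and `M⁻¹` have integer entries. Suppose
`P∘M = A∘P` where `P` is the projection onto the first `k` coordinates and
`A = A_u ⊕ A_s` is block-diagonal hyperbolic, with `A_u` a `k_u×k_u` invertible block with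
`‖A_u⁻¹‖ < 1` and `A_s` a `k_s×k_s` block with `‖A_s‖ < 1` (`k = k_u + k_s`; `P_u`, `P_s`
are the compositions of `P` with the projections onto the first `k_u` and last `k_s`
coordinates of `ℝ^k`). Then
`Φ̂(z) := (lim_{n→∞} A_u^{−n} P_u(F̂ⁿ(z)), lim_{n→∞} A_sⁿ P_s(F̂^{−n}(z))) ∈ ℝ^k` is well
defined and continuous, satisfies `Φ̂(F̂ z) = A·Φ̂(z)` and `Φ̂(z + p) = Φ̂(z) + P p` for all
`z ∈ ℝ^d`, `p ∈ ℤ^d`; hence `F̂` descends to a torus map semi-conjugate to the linear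
torus map `θ ↦ Aθ mod 1` on `ℝ^k/ℤ^k`.
-/
theorem stmt7 (d k ku : ℕ) (hku : ku ≤ k) (hkd : k ≤ d)
    (M : Matrix (Fin d) (Fin d) ℝ) (hMint : ∀ i j, ∃ n : ℤ, M i j = (n : ℝ))
    (hMinv : ∃ N : Matrix (Fin d) (Fin d) ℝ,
      (∀ i j, ∃ n : ℤ, N i j = (n : ℝ)) ∧ M * N = 1 ∧ N * M = 1)
    (G : EuclideanSpace ℝ (Fin d) → EuclideanSpace ℝ (Fin d))
    (hGcont : Continuous G) (hGbdd : ∃ C, ∀ z, ‖G z‖ ≤ C)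
    (hGper : ∀ (z : EuclideanSpace ℝ (Fin d)) (p : Fin d → ℤ),
      G (z + toEuc d fun i => (p i : ℝ)) = G z)
    (F : EuclideanSpace ℝ (Fin d) ≃ₜ EuclideanSpace ℝ (Fin d))
    (hF : ∀ z, F z = toEuc d (M.mulVec z) + G z)
    (Au : EuclideanSpace ℝ (Fin ku) ≃L[ℝ] EuclideanSpace ℝ (Fin ku))
    (hAu : ‖(Au.symm : EuclideanSpace ℝ (Fin ku) →L[ℝ] EuclideanSpace ℝ (Fin ku))‖ < 1)
    (As : EuclideanSpace ℝ (Fin (k - ku)) →L[ℝ] EuclideanSpace ℝ (Fin (k - ku)))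
    (hAs : ‖As‖ < 1)
    (hPuM : ∀ z : EuclideanSpace ℝ (Fin d),
      projP k ku hku (projP d k hkd (toEuc d (M.mulVec z)))
        = Au (projP k ku hku (projP d k hkd z)))
    (hPsM : ∀ z : EuclideanSpace ℝ (Fin d),
      projQ k ku hku (projP d k hkd (toEuc d (M.mulVec z)))
        = As (projQ k ku hku (projP d k hkd z))) :
    ∃ (Φu : EuclideanSpace ℝ (Fin d) → EuclideanSpace ℝ (Fin ku))
      (Φs : EuclideanSpace ℝ (Fin d) → EuclideanSpace ℝ (Fin (k - ku))),
      (∀ z, Tendsto (fun n : ℕ =>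
          (Au.symm ^ n) (projP k ku hku (projP d k hkd (F^[n] z))))
        atTop (𝓝 (Φu z))) ∧
      (∀ z, Tendsto (fun n : ℕ =>
          (As ^ n) (projQ k ku hku (projP d k hkd (F.symm^[n] z))))
        atTop (𝓝 (Φs z))) ∧
      Continuous Φu ∧ Continuous Φs ∧
      (∀ z, Φu (F z) = Au (Φu z)) ∧
      (∀ z, Φs (F z) = As (Φs z)) ∧
      (∀ (z : EuclideanSpace ℝ (Fin d)) (p : Fin d → ℤ),
        Φu (z + toEuc d fun i => (p i : ℝ))
          = Φu z + projP k ku hku (projP d k hkd (toEuc d fun i => (p i : ℝ)))) ∧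
      (∀ (z : EuclideanSpace ℝ (Fin d)) (p : Fin d → ℤ),
        Φs (z + toEuc d fun i => (p i : ℝ))
          = Φs z + projQ k ku hku (projP d k hkd (toEuc d fun i => (p i : ℝ)))) ∧
      -- hence `F̂` descends to a torus map semi-conjugate to `θ ↦ Aθ mod 1`:
      ∃ (Fbar : (Fin d → AddCircle (1 : ℝ)) → (Fin d → AddCircle (1 : ℝ)))
        (Φbar : (Fin d → AddCircle (1 : ℝ)) →
          (Fin ku → AddCircle (1 : ℝ)) × (Fin (k - ku) → AddCircle (1 : ℝ)))
        (Abar : (Fin ku → AddCircle (1 : ℝ)) × (Fin (k - ku) → AddCircle (1 : ℝ)) →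
          (Fin ku → AddCircle (1 : ℝ)) × (Fin (k - ku) → AddCircle (1 : ℝ))),
        (∀ z, Fbar (torusProj d z) = torusProj d (F z)) ∧
        (∀ z, Φbar (torusProj d z) = (torusProj ku (Φu z), torusProj (k - ku) (Φs z))) ∧
        (∀ (x : EuclideanSpace ℝ (Fin ku)) (y : EuclideanSpace ℝ (Fin (k - ku))),
          Abar (torusProj ku x, torusProj (k - ku) y)
            = (torusProj ku (Au x), torusProj (k - ku) (As y))) ∧
        (∀ θ, Φbar (Fbar θ) = Abar (Φbar θ)) :=
  stmt7_general d k ku hku hkd M hMint hMinv G hGbdd hGper F hF Au hAu As hAs hPuM hPsM
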